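/- arXiv:2411.01243 — 2 statements merged into one kernel-verified Lean document; each statement's English description precedes it below -/
import Mathlib

section
/- Let μ₂^{n-1} be the subgroup of the center of SL₂^n consisting of tuples (x₁,…,xₙ) of scalar matrices ±I with x₁⋯xₙ = 1, and let 𝔾ₘ^{n-1} be the subgroup of the center of GL₂^n consisting of tuples (z₁,…,zₙ) of scalar matrices with z₁⋯zₙ = 1. Then SL₂^n/μ₂^{n-1} is isomorphic, as a group scheme over a field, to the kernel of the character det: GL₂^n/𝔾ₘ^{n-1} → 𝔾ₘ sending the class of (g₁,…,gₙ) to det(g₁)⋯det(gₙ). -/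
noncomputable section
open Matrix

private lemma toGL_inj {F : Type*} [Field F] :
    Function.Injective (SpecialLinearGroup.toGL :
      SpecialLinearGroup (Fin 2) F → GL (Fin 2) F) := by
  intro a b h
  ext i j
  exact congrArg (fun m : GL (Fin 2) F => (m : Matrix (Fin 2) (Fin 2) F) i j) h

/-- Let μ ⊂ SL₂ⁿ be the subgroup of tuples of scalar matrices ±I with product 1, and
let Z ⊂ GL₂ⁿ be the subgroup of tuples of scalar matrices with product 1. Then, on
points over an algebraically closed field, SL₂ⁿ/μ is isomorphic to the kernel of the
character det : GL₂ⁿ/Z → 𝔾ₘ, [(g₁,…,gₙ)] ↦ det(g₁)⋯det(gₙ). -/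
theorem stmt2 (F : Type*) [Field F] [IsAlgClosed F] (n : ℕ)
    (μ : Subgroup (Fin n → SpecialLinearGroup (Fin 2) F)) [μ.Normal]
    (hμ : ∀ x, x ∈ μ ↔
      ((∀ i, ∃ ε : F, (ε = 1 ∨ ε = -1) ∧
          (x i : Matrix (Fin 2) (Fin 2) F) = ε • (1 : Matrix (Fin 2) (Fin 2) F)) ∧
        (List.ofFn fun i => x i).prod = 1))
    (Z : Subgroup (Fin n → GL (Fin 2) F)) [Z.Normal]
    (hZ : ∀ z, z ∈ Z ↔
      ((∀ i, ∃ c : F, (z i : Matrix (Fin 2) (Fin 2) F) = c • (1 : Matrix (Fin 2) (Fin 2) F)) ∧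
        (List.ofFn fun i => z i).prod = 1))
    (K : Subgroup ((Fin n → GL (Fin 2) F) ⧸ Z))
    (hK : ∀ y, y ∈ K ↔ ∃ g : Fin n → GL (Fin 2) F,
      QuotientGroup.mk g = y ∧
        (List.ofFn fun i => ((g i : Matrix (Fin 2) (Fin 2) F)).det).prod = 1) :
    Nonempty (((Fin n → SpecialLinearGroup (Fin 2) F) ⧸ μ) ≃* K) := by
  classical
  set M := Matrix (Fin 2) (Fin 2) F
  -- the pointwise inclusion SL₂ⁿ → GL₂ⁿ
  set φ : (Fin n → SpecialLinearGroup (Fin 2) F) →* (Fin n → GL (Fin 2) F) :=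
    { toFun := fun x i => (x i).toGL
      map_one' := funext fun _ => _root_.map_one _
      map_mul' := fun _ _ => funext fun _ => _root_.map_mul _ _ _ } with hφ
  have hφK : ∀ x, (QuotientGroup.mk' Z) (φ x) ∈ K := by
    intro x
    rw [hK]
    refine ⟨φ x, rfl, ?_⟩
    have : (fun i => ((φ x i : M)).det) = fun _ => 1 := by
      funext i; exact (x i).prop
    rw [this]
    simp
  set ψ : (Fin n → SpecialLinearGroup (Fin 2) F) →* K :=
    ((QuotientGroup.mk' Z).comp φ).codRestrict K (fun x => hφK x) with hψ
  have hψZ : ∀ x, ψ x = 1 ↔ φ x ∈ Z := by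
    intro x
    rw [← QuotientGroup.eq_one_iff (φ x)]
    exact ⟨fun h => congrArg Subtype.val h, fun h => Subtype.ext h⟩
  -- kernel computation
  have hker : ψ.ker = μ := by
    ext x
    rw [MonoidHom.mem_ker, hψZ, hZ, hμ]
    have hcoe : ∀ i, ((φ x i : M)) = (x i : M) := fun i => rfl
    have hlist : (List.ofFn fun i => φ x i) = (List.ofFn fun i => x i).map
        SpecialLinearGroup.toGL := by
      rw [List.map_ofFn]; rfl
    have hprod : (List.ofFn fun i => φ x i).prod = 1 ↔
        (List.ofFn fun i => x i).prod = 1 := by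
      rw [hlist, ← map_list_prod]
      constructor
      · intro h
        apply toGL_inj
        rw [h, _root_.map_one]
      · intro h; rw [h, _root_.map_one]
    constructor
    · rintro ⟨hs, hp⟩
      refine ⟨fun i => ?_, hprod.mp hp⟩
      obtain ⟨c, hc⟩ := hs i
      rw [hcoe i] at hc
      refine ⟨c, ?_, hc⟩
      have hd : ((x i : M)).det = 1 := (x i).prop
      rw [hc] at hd
      rw [det_smul, det_one] at hd
      simp only [Fintype.card_fin, mul_one] at hd
      rw [← mul_self_eq_one_iff, ← sq]
      exact hd
    · rintro ⟨hs, hp⟩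
      refine ⟨fun i => ?_, hprod.mpr hp⟩
      obtain ⟨ε, _, hε⟩ := hs i
      exact ⟨ε, by rw [hcoe i]; exact hε⟩
  -- surjectivity
  have hsurj : Function.Surjective ψ := by
    rintro ⟨y, hy⟩
    rw [hK] at hy
    obtain ⟨g, hg, hdet⟩ := hy
    have hdets : ∀ i, ((g i : M)).det ≠ 0 := fun i =>
      (Matrix.isUnits_det_units (g i)).ne_zero
    have hdet' : ∏ i, ((g i : M)).det = 1 := by
      rw [← List.prod_ofFn]; exact hdet
    -- choose square roots with product 1
    obtain ⟨d, hd0, hd2, hdprod⟩ : ∃ d : Fin n → F, (∀ i, d i ≠ 0) ∧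
        (∀ i, (d i) ^ 2 = ((g i : M)).det) ∧ ∏ i, d i = 1 := by
      have hc : ∀ i, ∃ c : F, c ≠ 0 ∧ c ^ 2 = ((g i : M)).det := by
        intro i
        obtain ⟨c, hc⟩ := IsAlgClosed.exists_pow_nat_eq ((g i : M)).det (n := 2) (by norm_num)
        refine ⟨c, fun h => ?_, hc⟩
        rw [h] at hc
        exact hdets i (by rw [← hc]; ring)
      choose c hc0 hc2 using hc
      have hs2 : (∏ i, c i) ^ 2 = 1 := by
        rw [← Finset.prod_pow]
        calc ∏ i, (c i) ^ 2 = ∏ i, ((g i : M)).det := by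
              exact Finset.prod_congr rfl fun i _ => hc2 i
          _ = 1 := hdet'
      have hsne : (∏ i, c i) ≠ 0 := Finset.prod_ne_zero_iff.mpr fun i _ => hc0 i
      cases n with
      | zero => exact ⟨c, hc0, hc2, by simp⟩
      | succ m =>
        set s := ∏ i, c i with hs
        refine ⟨fun i => if i = 0 then s⁻¹ * c i else c i, fun i => ?_, fun i => ?_, ?_⟩
        · dsimp only
          by_cases h : i = 0
          · rw [if_pos h]
            exact mul_ne_zero (inv_ne_zero hsne) (hc0 i)
          · rw [if_neg h]; exact hc0 i
        · dsimp only
          by_cases h : i = 0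
          · rw [if_pos h, mul_pow, inv_pow, hs2, inv_one, one_mul]
            exact hc2 i
          · rw [if_neg h]; exact hc2 i
        · rw [Fin.prod_univ_succ]
          simp only [if_true]
          have : ∀ i : Fin m, (if i.succ = 0 then s⁻¹ * c i.succ else c i.succ) = c i.succ := by
            intro i; simp [Fin.succ_ne_zero i]
          rw [Finset.prod_congr rfl fun i _ => this i]
          have hsdec : s = c 0 * ∏ i : Fin m, c i.succ := by
            rw [hs, Fin.prod_univ_succ]
          rw [mul_assoc, ← hsdec, inv_mul_cancel₀ hsne]
    -- the SL₂ rescaling of g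
    set h : Fin n → SpecialLinearGroup (Fin 2) F := fun i =>
      ⟨(d i)⁻¹ • (g i : M), by
        rw [det_smul]
        simp only [Fintype.card_fin]
        rw [inv_pow, hd2 i]
        exact inv_mul_cancel₀ (hdets i)⟩ with hh
    -- the scalar correction
    set z : Fin n → GL (Fin 2) F := fun i =>
      Units.map (algebraMap F M).toMonoidHom (Units.mk0 (d i) (hd0 i)) with hz
    have hzcoe : ∀ i, ((z i : M)) = d i • (1 : M) := by
      intro i
      show algebraMap F M (d i) = d i • 1
      exact Algebra.algebraMap_eq_smul_one (d i)
    have hzZ : z ∈ Z := by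
      rw [hZ]
      refine ⟨fun i => ⟨d i, hzcoe i⟩, ?_⟩
      apply Units.ext
      have h1 : (((List.ofFn z).prod : (M)ˣ) : M) =
          ((List.ofFn z).map (Units.coeHom M)).prod := map_list_prod (Units.coeHom M) _
      rw [h1]
      have : (List.ofFn z).map (Units.coeHom M) =
          List.ofFn fun i => algebraMap F M (d i) := by
        rw [List.map_ofFn]; rfl
      rw [this]
      have : (List.ofFn fun i => algebraMap F M (d i)) =
          (List.ofFn d).map (algebraMap F M) := by rw [List.map_ofFn]; rfl
      rw [this, ← map_list_prod, List.prod_ofFn, hdprod, _root_.map_one]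
      rfl
    have hgz : g = z * φ h := by
      funext i
      apply Units.ext
      show (g i : M) = (z i : M) * ((h i : SpecialLinearGroup (Fin 2) F) : M)
      rw [hzcoe i]
      show (g i : M) = d i • (1 : M) * ((d i)⁻¹ • (g i : M))
      rw [smul_mul_assoc, one_mul, smul_smul, mul_inv_cancel₀ (hd0 i), one_smul]
    refine ⟨h, ?_⟩
    apply Subtype.ext
    show QuotientGroup.mk (φ h) = y
    rw [← hg, hgz, QuotientGroup.mk_mul,
      (QuotientGroup.eq_one_iff z).mpr hzZ, one_mul]
  exact ⟨(QuotientGroup.quotientMulEquivOfEq hker.symm).trans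
    (QuotientGroup.quotientKerEquivOfSurjective ψ hsurj)⟩
end
end

section
/- For F a field, the group homomorphism from (GL₂(F) × GL₂(F))^det := {(g,h) : det(g)det(h) = 1} to the orthogonal group of the quadratic space (M₂(F), det), given by (g,h)·x = g x hᵀ, has kernel equal to the diagonal embedding of F^× via z ↦ (zI, z^{-1}I). -/
/-! If `x ↦ A x B` is the identity then `A B = 1`, so `A x A⁻¹ = x` for every `x`: `A` is central,
hence a scalar `c`, and `B = c⁻¹`. -/

open Matrix

namespace Matrix

variable {n R : Type*} [DecidableEq n] [CommRing R]

theorem transpose_eq_smul_one_iff {A : Matrix n n R} {c : R} : Aᵀ = c • 1 ↔ A = c • 1 := by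
  rw [← transpose_inj, transpose_transpose, transpose_smul, transpose_one]

variable [Fintype n]

theorem forall_mul_mul_eq_self_iff [Nonempty n] {A B : Matrix n n R} :
    (∀ x, A * x * B = x) ↔ ∃ u : Rˣ, A = (u : R) • 1 ∧ B = ((u⁻¹ : Rˣ) : R) • 1 := by
  constructor
  · intro hAB
    have hA_mul_B : A * B = 1 := by simpa using hAB 1
    have hBA : B * A = 1 := mul_eq_one_comm.mp hA_mul_B
    have hcentral : ∀ x, Commute x A := fun x =>
      calc x * A = A * x * B * A := by rw [hAB]
        _ = A * x := by rw [Matrix.mul_assoc, hBA, Matrix.mul_one]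
    obtain ⟨c, hc⟩ := mem_range_scalar_of_commute_single fun i j _ => hcentral (single i j 1)
    have hA : A = c • 1 := by rw [← hc, scalar_apply, smul_one_eq_diagonal]
    have hcB : c • B = 1 := by rw [← hA_mul_B, hA, smul_mul, Matrix.one_mul]
    let i : n := Classical.arbitrary n
    let u : Rˣ := Units.mkOfMulEqOne c (B i i) (by simpa using congrFun (congrFun hcB i) i)
    refine ⟨u, hA, ?_⟩
    rw [← hcB, smul_smul, show ((u⁻¹ : Rˣ) : R) * c = 1 from u.inv_mul, one_smul]
  · rintro ⟨u, rfl, rfl⟩ x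
    rw [smul_mul, Matrix.one_mul, Matrix.mul_smul, Matrix.mul_one, smul_smul, ← Units.val_mul,
      inv_mul_cancel u, Units.val_one, one_smul]

end Matrix

theorem stmt4_general (F : Type*) [Field F] (g h : GL (Fin 2) F) :
    (∀ x : Matrix (Fin 2) (Fin 2) F,
        (g : Matrix (Fin 2) (Fin 2) F) * x * (h : Matrix (Fin 2) (Fin 2) F)ᵀ = x) ↔
      ∃ z : Fˣ, (g : Matrix (Fin 2) (Fin 2) F) = (z : F) • (1 : Matrix (Fin 2) (Fin 2) F) ∧
        (h : Matrix (Fin 2) (Fin 2) F) = ((z⁻¹ : Fˣ) : F) • (1 : Matrix (Fin 2) (Fin 2) F) := by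
  simp only [forall_mul_mul_eq_self_iff, transpose_eq_smul_one_iff]

/-- The homomorphism from (GL₂(F) × GL₂(F))^det = {(g,h) : det g · det h = 1} to the
orthogonal group of the quadratic space (M₂(F), det), given by (g,h)·x = g x hᵀ, has
kernel exactly the diagonally embedded F^×, z ↦ (zI, z⁻¹I): a pair (g,h) with
det g · det h = 1 acts trivially on M₂(F) iff it is of this form. -/
theorem stmt4 (F : Type*) [Field F] (g h : GL (Fin 2) F)
    (hdet : (g : Matrix (Fin 2) (Fin 2) F).det * (h : Matrix (Fin 2) (Fin 2) F).det = 1) :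
    (∀ x : Matrix (Fin 2) (Fin 2) F,
        (g : Matrix (Fin 2) (Fin 2) F) * x * (h : Matrix (Fin 2) (Fin 2) F)ᵀ = x) ↔
      ∃ z : Fˣ, (g : Matrix (Fin 2) (Fin 2) F) = (z : F) • (1 : Matrix (Fin 2) (Fin 2) F) ∧
        (h : Matrix (Fin 2) (Fin 2) F) = ((z⁻¹ : Fˣ) : F) • (1 : Matrix (Fin 2) (Fin 2) F) :=
  stmt4_general F g h
end
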